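/- Let G be a connected P₄-free graph with at least two vertices. Then the vertex set of G can be partitioned into two nonempty sets V₁ and V₂ such that every vertex of V₁ is adjacent to every vertex of V₂ (i.e., G is a join of two induced subgraphs). -/

import Mathlib

open SimpleGraph

/-- The join of two graphs on disjoint vertex sets: disjoint union plus all cross edges. -/
def gJoin {α β : Type*} (G : SimpleGraph α) (H : SimpleGraph β) : SimpleGraph (α ⊕ β) where
  Adj x y := match x, y with
    | Sum.inl a, Sum.inl b => G.Adj a b
    | Sum.inr a, Sum.inr b => H.Adj a b
    | Sum.inl _, Sum.inr _ => True
    | Sum.inr _, Sum.inl _ => True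
  symm := ⟨by rintro (a|a) (b|b) h <;> first | exact h.symm | trivial⟩
  loopless := ⟨by rintro (a|a) h; exacts [G.irrefl h, H.irrefl h]⟩

/-- A graph is `P₄`-free if it has no induced subgraph isomorphic to the path on 4 vertices. -/
def P4Free {V : Type*} (G : SimpleGraph V) : Prop :=
  IsEmpty (SimpleGraph.pathGraph 4 ↪g G)

/-- `T` is a connected dominating set of `G`. -/
def IsConnDomSet {V : Type*} (G : SimpleGraph V) (T : Set V) : Prop :=
  T.Nonempty ∧ (G.induce T).Connected ∧ ∀ u ∉ T, ∃ t ∈ T, G.Adj u t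

/-- `T` is a minimum connected dominating set of `G`. -/
def IsMinConnDomSet {V : Type*} (G : SimpleGraph V) (T : Set V) : Prop :=
  IsConnDomSet G T ∧ ∀ T' : Set V, IsConnDomSet G T' → T.ncard ≤ T'.ncard

/-- The graph `K₁ ⊔ K₂`: three vertices, exactly one edge (between 0 and 1). -/
def graphK1K2 : SimpleGraph (Fin 3) := SimpleGraph.fromRel (fun a b => a = 0 ∧ b = 1)

/-- The star `K_{1,3}`: vertex 0 adjacent to 1, 2, 3. -/
def graphK13 : SimpleGraph (Fin 4) := SimpleGraph.fromRel (fun a _ => a = 0)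

/-- The graph `B = K₁ * (K₁ ⊔ K₂)`: vertex 0 adjacent to all, plus the edge 2-3. -/
def graphB : SimpleGraph (Fin 4) := SimpleGraph.fromRel (fun a b => a = 0 ∨ (a = 2 ∧ b = 3))

/-!
Since `P₄` is self-complementary, the complement of a `P₄`-free graph is `P₄`-free. By induction
on the number of vertices, for every set `s` of at least two vertices either `G` or `Gᶜ` is
disconnected on `s`: if `s` is split by `A | B` with no edges across and `v` is added, then
either `v` misses one side entirely, or `v` sees all of `s` (so `Gᶜ` is disconnected), or the
non-neighbours of `v` are separated from `v` and its neighbours, because an edge `x y` with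
`v ≁ x`, `v ~ y` inside one side, together with a neighbour `w` of `v` on the other side, would
be an induced path `x y v w`. For connected `G`, the complement is therefore disconnected, which
means that `G` is a join.
-/

namespace P4Free

variable {V : Type*} {G : SimpleGraph V}

theorem false_of_induced_path (hG : P4Free G) {a b c d : V} (hab : G.Adj a b) (hbc : G.Adj b c)
    (hcd : G.Adj c d) (hac : Gᶜ.Adj a c) (had : Gᶜ.Adj a d) (hbd : Gᶜ.Adj b d) : False := by
  rw [compl_adj] at hac had hbd
  refine hG.false ⟨⟨![a, b, c, d], fun i j hij => ?_⟩, fun {i j} => ?_⟩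
  · have := hab.ne; have := hbc.ne; have := hcd.ne
    fin_cases i <;> fin_cases j <;> simp_all [eq_comm]
  · have := hab.symm; have := hbc.symm; have := hcd.symm
    change G.Adj (![a, b, c, d] i) (![a, b, c, d] j) ↔ _
    fin_cases i <;> fin_cases j <;> simp_all [pathGraph_adj, adj_comm]

/-- An induced path `a b c d` in `Gᶜ` is the induced path `b d a c` in `G`. -/
theorem compl (hG : P4Free G) : P4Free Gᶜ := by
  refine ⟨fun f => ?_⟩
  have hf {i j : Fin 4} (h : (pathGraph 4).Adj i j) : Gᶜ.Adj (f i) (f j) := f.map_adj_iff.2 h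
  have hf' {i j : Fin 4} (hne : i ≠ j) (h : ¬(pathGraph 4).Adj i j) : G.Adj (f i) (f j) := by
    simpa [compl_adj, f.injective.ne hne] using f.map_adj_iff.not.2 h
  exact hG.false_of_induced_path (a := f 1) (b := f 3) (c := f 0) (d := f 2)
    (hf' (by decide) (by simp [pathGraph_adj])) (hf' (by decide) (by simp [pathGraph_adj]))
    (hf' (by decide) (by simp [pathGraph_adj])) (hf (by simp [pathGraph_adj]))
    (hf (by simp [pathGraph_adj])) (hf (by simp [pathGraph_adj]))

end P4Free

section DisconnectedOn

variable {V : Type*} {G : SimpleGraph V} {s A : Set V} {v : V}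

def DisconnectedOn (G : SimpleGraph V) (s : Set V) : Prop :=
  ∃ A ⊆ s, A.Nonempty ∧ (s \ A).Nonempty ∧ ∀ a ∈ A, ∀ b ∈ s \ A, ¬G.Adj a b

theorem SimpleGraph.Preconnected.not_disconnectedOn_univ (hG : G.Preconnected) :
    ¬DisconnectedOn G Set.univ := by
  rintro ⟨A, -, ⟨a, ha⟩, ⟨b, -, hb⟩, hA⟩
  obtain ⟨d, -, hd, hd'⟩ := (hG a b).some.exists_boundary_dart A ha hb
  exact hA _ hd _ ⟨trivial, hd'⟩ d.adj

theorem disconnectedOn_insert_of_forall_not_adj (hv : v ∉ s) (hs : s.Nonempty)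
    (h : ∀ x ∈ s, ¬G.Adj v x) : DisconnectedOn G (insert v s) := by
  refine ⟨{v}, by simp, Set.singleton_nonempty v, ?_, ?_⟩
  all_goals rw [Set.insert_sdiff_self_of_notMem hv]
  · exact hs
  · rintro a rfl
    exact h

theorem disconnectedOn_compl_insert_of_forall_adj (hv : v ∉ s) (hs : s.Nonempty)
    (h : ∀ x ∈ s, G.Adj v x) : DisconnectedOn Gᶜ (insert v s) :=
  disconnectedOn_insert_of_forall_not_adj hv hs fun x hx hvx => ((compl_adj ..).1 hvx).2 (h x hx)

theorem disconnectedOn_insert_of_sep_of_forall_not_adj (hA : A ⊆ s) (hAne : A.Nonempty)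
    (hBne : (s \ A).Nonempty) (hAB : ∀ a ∈ A, ∀ b ∈ s \ A, ¬G.Adj a b)
    (hvA : ∀ a ∈ A, ¬G.Adj v a) : DisconnectedOn G (insert v s) := by
  refine ⟨A, hA.trans (Set.subset_insert v s), hAne,
    hBne.mono (Set.sdiff_subset_sdiff_left (Set.subset_insert v s)), ?_⟩
  rintro a ha b ⟨rfl | hb, hbA⟩
  · exact fun hab => hvA a ha hab.symm
  · exact hAB a ha b ⟨hb, hbA⟩

theorem P4Free.disconnectedOn_insert (hG : P4Free G) (hA : A ⊆ s) (hAne : A.Nonempty)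
    (hBne : (s \ A).Nonempty) (hAB : ∀ a ∈ A, ∀ b ∈ s \ A, ¬G.Adj a b) (hv : v ∉ s) :
    DisconnectedOn G (insert v s) ∨ DisconnectedOn Gᶜ (insert v s) := by
  by_cases hvA : ∀ a ∈ A, ¬G.Adj v a
  · exact Or.inl (disconnectedOn_insert_of_sep_of_forall_not_adj hA hAne hBne hAB hvA)
  by_cases hvB : ∀ b ∈ s \ A, ¬G.Adj v b
  · refine Or.inl (disconnectedOn_insert_of_sep_of_forall_not_adj Set.sdiff_subset hBne ?_ ?_ hvB)
    all_goals rw [Set.sdiff_sdiff_cancel_left hA]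
    · exact hAne
    · exact fun b hb a ha hba => hAB a ha b hb hba.symm
  push Not at hvA hvB
  obtain ⟨a₀, ha₀, hva₀⟩ := hvA
  obtain ⟨b₀, hb₀, hvb₀⟩ := hvB
  by_cases hall : ∀ x ∈ s, G.Adj v x
  · exact Or.inr (disconnectedOn_compl_insert_of_forall_adj hv ⟨a₀, hA ha₀⟩ hall)
  push Not at hall
  obtain ⟨x₀, hx₀, hvx₀⟩ := hall
  have hcross : ∀ a ∈ A, ∀ b ∈ s \ A, Gᶜ.Adj a b ∧ Gᶜ.Adj b a := fun a ha b hb =>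
    have hab : Gᶜ.Adj a b := (compl_adj ..).2 ⟨fun h => hb.2 (h ▸ ha), hAB a ha b hb⟩
    ⟨hab, hab.symm⟩
  refine Or.inl ⟨{x ∈ s | ¬G.Adj v x}, fun x hx => Set.mem_insert_of_mem v hx.1, ⟨x₀, hx₀, hvx₀⟩,
    ⟨v, Set.mem_insert v s, fun h => hv h.1⟩, ?_⟩
  rintro x ⟨hxs, hvx⟩ y ⟨rfl | hys, hy⟩ hxy
  · exact hvx hxy.symm
  have hvy : G.Adj v y := by simpa [hys] using hy
  have hxv : Gᶜ.Adj x v := (compl_adj ..).2 ⟨fun h => hv (h ▸ hxs), fun h => hvx h.symm⟩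
  by_cases hxA : x ∈ A <;> by_cases hyA : y ∈ A
  · exact hG.false_of_induced_path hxy hvy.symm hvb₀ hxv (hcross x hxA b₀ hb₀).1
      (hcross y hyA b₀ hb₀).1
  · exact hAB x hxA y ⟨hys, hyA⟩ hxy
  · exact hAB y hyA x ⟨hxs, hxA⟩ hxy.symm
  · exact hG.false_of_induced_path hxy hvy.symm hva₀ hxv (hcross a₀ ha₀ x ⟨hxs, hxA⟩).2
      (hcross a₀ ha₀ y ⟨hys, hyA⟩).2

theorem P4Free.disconnectedOn_or_compl (hG : P4Free G) (hfin : s.Finite) (hs : s.Nontrivial) :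
    DisconnectedOn G s ∨ DisconnectedOn Gᶜ s := by
  induction s, hfin using Set.Finite.induction_on with
  | empty => exact absurd hs Set.not_nontrivial_empty
  | @insert v s hv _ ih =>
    obtain ⟨w, hw⟩ : s.Nonempty := by
      by_contra! h
      simp [h] at hs
    by_cases hst : s.Nontrivial
    · rcases ih hst with ⟨A, hA, hAne, hBne, hAB⟩ | ⟨A, hA, hAne, hBne, hAB⟩
      · exact hG.disconnectedOn_insert hA hAne hBne hAB hv
      · simpa only [compl_compl, or_comm] using hG.compl.disconnectedOn_insert hA hAne hBne hAB hv
    obtain rfl : s = {w} := (Set.not_nontrivial_iff.1 hst).eq_singleton_of_mem hw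
    by_cases hvw : G.Adj v w
    · exact Or.inr (disconnectedOn_compl_insert_of_forall_adj hv ⟨w, rfl⟩ (by simpa using hvw))
    · exact Or.inl (disconnectedOn_insert_of_forall_not_adj hv ⟨w, rfl⟩ (by simpa using hvw))

end DisconnectedOn

/-- A connected P₄-free graph with at least two vertices is a join: its vertex set splits
into two nonempty parts with all cross edges present. -/
theorem stmt6 {V : Type} [Fintype V] (G : SimpleGraph V) (hc : G.Connected)
    (hnt : Nontrivial V) (h4 : P4Free G) :
    ∃ V₁ V₂ : Set V, V₁.Nonempty ∧ V₂.Nonempty ∧ V₁ ∩ V₂ = ∅ ∧ V₁ ∪ V₂ = Set.univ ∧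
      ∀ x ∈ V₁, ∀ y ∈ V₂, G.Adj x y := by
  obtain ⟨A, -, hAne, ⟨b, -, hb⟩, hA⟩ :=
    (h4.disconnectedOn_or_compl Set.finite_univ Set.nontrivial_univ).resolve_left
      hc.preconnected.not_disconnectedOn_univ
  refine ⟨A, Aᶜ, hAne, ⟨b, hb⟩, Set.inter_compl_self A, Set.union_compl_self A, fun x hx y hy => ?_⟩
  have hxy : x ≠ y := fun h => hy (h ▸ hx)
  simpa [compl_adj, hxy] using hA x hx y ⟨trivial, hy⟩
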